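/- arXiv:1806.11273 — 2 statements merged into one kernel-verified Lean document; each statement's English description precedes it below -/
import Mathlib

section
/- For every d ≥ 2 there exists an additive submonoid H of ℕ^d of rank d such that the system of sets of lengths of H equals P_fin = {{0}, {1}} ∪ {S ⊂ ℤ_{≥2} : S finite and nonempty}, i.e., H has full system of sets of lengths. -/
/-- `a` is an atom of the additive submonoid `S` of `ℕ^d`. -/
def IsAtomOf {d : ℕ} (S : AddSubmonoid (Fin d → ℕ)) (a : Fin d → ℕ) : Prop :=
  a ∈ S ∧ a ≠ 0 ∧ ∀ y ∈ S, ∀ z ∈ S, a = y + z → y = 0 ∨ z = 0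

/-- The set of lengths of `x` in the submonoid `S` of `ℕ^d`. -/
def LengthsOf {d : ℕ} (S : AddSubmonoid (Fin d → ℕ)) (x : Fin d → ℕ) : Set ℕ :=
  {l | ∃ s : Multiset (Fin d → ℕ),
    (∀ a ∈ s, IsAtomOf S a) ∧ s.sum = x ∧ Multiset.card s = l}

/-- The rank of a submonoid `H` of `ℕ^d`. -/
noncomputable def monoidRank {d : ℕ} (H : AddSubmonoid (Fin d → ℕ)) : ℕ :=
  Module.finrank ℚ (Submodule.span ℚ ((fun x : Fin d → ℕ => fun i => (x i : ℚ)) '' H))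

/-- A finset is "valid" if it is nonempty and all elements are ≥ 2. -/
def FValid (S : Finset ℕ) : Prop := S.Nonempty ∧ ∀ n ∈ S, 2 ≤ n

instance : DecidablePred FValid := fun S => by unfold FValid; infer_instance

/-- The "max" parameter of the level encoded by `e`. -/
def NE (e : ℕ) : ℕ :=
  (Encodable.decode (α := Finset ℕ) e).elim 2 (fun S => if FValid S then S.sup id else 2)

lemma NE_encode {S : Finset ℕ} (h : FValid S) : NE (Encodable.encode S) = S.sup id := by
  unfold NE
  rw [Encodable.encodek]
  simp [h]

lemma mem_le_NE {S : Finset ℕ} (h : FValid S) {n : ℕ} (hn : n ∈ S) :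
    n ≤ NE (Encodable.encode S) := by
  rw [NE_encode h]
  exact Finset.le_sup (f := id) hn

lemma two_le_NE (e : ℕ) : 2 ≤ NE e := by
  unfold NE
  cases hde : Encodable.decode (α := Finset ℕ) e with
  | none => simp
  | some S =>
    by_cases hv : FValid S
    · simp only [Option.elim, if_pos hv]
      obtain ⟨⟨n, hn⟩, h2⟩ := hv
      exact le_trans (h2 n hn) (Finset.le_sup (f := id) hn)
    · simp [hv]

/-- The "width" parameter of the level encoded by `e`. -/
def QE (e : ℕ) : ℕ := 4 * NE e

lemma eight_le_QE (e : ℕ) : 8 ≤ QE e := by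
  have := two_le_NE e; unfold QE; omega

/-- The superincreasing scale sequence. -/
def YY : ℕ → ℕ
  | 0 => 1
  | e+1 => (2 * QE (e+1) + 1) * (3 * NE e * YY e)

lemma YY_pos (e : ℕ) : 1 ≤ YY e := by
  induction e with
  | zero => simp [YY]
  | succ e ih =>
    have h1 := two_le_NE e
    have h2 := eight_le_QE (e+1)
    calc 1 ≤ 1 * (1 * 1) := by norm_num
    _ ≤ (2 * QE (e+1) + 1) * (3 * NE e * YY e) := by
        apply Nat.mul_le_mul (by omega) (Nat.mul_le_mul (by omega) ih)
    _ = YY (e+1) := rfl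

lemma YY_lt_succ (e : ℕ) : YY e < YY (e+1) := by
  have h1 := two_le_NE e
  have h2 := eight_le_QE (e+1)
  have h3 := YY_pos e
  calc YY e < 2 * (3 * NE e * YY e) := by nlinarith
  _ ≤ (2 * QE (e+1) + 1) * (3 * NE e * YY e) := Nat.mul_le_mul_right _ (by omega)
  _ = YY (e+1) := rfl

lemma YY_mono {a b : ℕ} (h : a ≤ b) : YY a ≤ YY b := by
  induction b with
  | zero => have : a = 0 := by omega
            simp [this]
  | succ b ih =>
    rcases Nat.lt_or_ge a (b+1) with h' | h'
    · exact le_trans (ih (by omega)) (le_of_lt (YY_lt_succ b))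
    · have : a = b + 1 := by omega
      simp [this]

lemma factA {a b : ℕ} (h : a < b) : 3 * NE a * YY a < YY b := by
  have hb : b = (b - 1) + 1 := by omega
  have key : 3 * NE a * YY a < YY (a + 1) := by
    have h2 := eight_le_QE (a+1)
    have h3 : 1 ≤ 3 * NE a * YY a := by
      have := two_le_NE a; have := YY_pos a; nlinarith
    calc 3 * NE a * YY a < 2 * (3 * NE a * YY a) := by omega
    _ ≤ (2 * QE (a+1) + 1) * (3 * NE a * YY a) := Nat.mul_le_mul_right _ (by omega)
    _ = YY (a+1) := rfl
  exact lt_of_lt_of_le key (YY_mono (by omega))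

lemma factAux {a b : ℕ} (h : a ≤ b) : 3 * NE a * YY a ≤ 3 * NE b * YY b := by
  rcases Nat.lt_or_ge a b with h' | h'
  · have h1 : 3 * NE a * YY a < YY b := factA h'
    have h2 : YY b ≤ 3 * NE b * YY b := by
      have := two_le_NE b; nlinarith [YY_pos b]
    omega
  · have : a = b := by omega
    simp [this]

lemma factB {a b : ℕ} (h : a < b) : 2 * QE b * (3 * NE a * YY a) < YY b := by
  obtain ⟨c, rfl⟩ : ∃ c, b = c + 1 := ⟨b - 1, by omega⟩
  have haux : 3 * NE a * YY a ≤ 3 * NE c * YY c := factAux (by omega)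
  have hpos : 1 ≤ 3 * NE c * YY c := by
    have := two_le_NE c; nlinarith [YY_pos c]
  calc 2 * QE (c+1) * (3 * NE a * YY a) ≤ 2 * QE (c+1) * (3 * NE c * YY c) :=
        Nat.mul_le_mul_left _ haux
  _ < (2 * QE (c+1) + 1) * (3 * NE c * YY c) := by nlinarith
  _ = YY (c+1) := rfl

/-! ### Geometry in `ℕ^d` -/

/-- the vector `(a, b, 0, ..., 0)`. -/
def pp {d : ℕ} (a b : ℕ) : Fin d → ℕ := fun i =>
  if (i : ℕ) = 0 then a else if (i : ℕ) = 1 then b else 0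

lemma pp_apply0 {d : ℕ} {a b : ℕ} {i : Fin d} (h : (i : ℕ) = 0) : pp a b i = a := by
  simp [pp, h]

lemma pp_apply1 {d : ℕ} {a b : ℕ} {i : Fin d} (h : (i : ℕ) = 1) : pp a b i = b := by
  simp [pp, h]

lemma pp_apply_ge {d : ℕ} {a b : ℕ} {i : Fin d} (h : 2 ≤ (i : ℕ)) : pp a b i = 0 := by
  unfold pp
  rw [if_neg (by omega), if_neg (by omega)]

lemma pp_add {d : ℕ} (a b c e : ℕ) : (pp a b : Fin d → ℕ) + pp c e = pp (a+c) (b+e) := by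
  funext i
  show pp a b i + pp c e i = _
  unfold pp
  split_ifs <;> simp

lemma pp_zero {d : ℕ} : (pp 0 0 : Fin d → ℕ) = 0 := by
  funext i
  show pp 0 0 i = 0
  unfold pp
  split_ifs <;> rfl

lemma pp_inj {d : ℕ} (hd : 2 ≤ d) {a b a' b' : ℕ} (h : (pp a b : Fin d → ℕ) = pp a' b') :
    a = a' ∧ b = b' := by
  constructor
  · have := congrFun h ⟨0, by omega⟩
    rwa [pp_apply0 rfl, pp_apply0 rfl] at this
  · have := congrFun h ⟨1, by omega⟩
    rwa [pp_apply1 rfl, pp_apply1 rfl] at this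

/-- Total of the coordinates. -/
def tot {d : ℕ} (x : Fin d → ℕ) : ℕ := ∑ i, x i

lemma tot_add {d : ℕ} (x y : Fin d → ℕ) : tot (x + y) = tot x + tot y := by
  unfold tot
  rw [← Finset.sum_add_distrib]
  rfl

lemma tot_zero {d : ℕ} : tot (0 : Fin d → ℕ) = 0 := by simp [tot]

lemma one_le_tot {d : ℕ} {x : Fin d → ℕ} (h : x ≠ 0) : 1 ≤ tot x := by
  rcases Function.ne_iff.mp h with ⟨i, hi⟩
  calc 1 ≤ x i := Nat.one_le_iff_ne_zero.mpr (by simpa using hi)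
  _ ≤ ∑ i, x i := Finset.single_le_sum (fun _ _ => Nat.zero_le _) (Finset.mem_univ i)

lemma tot_sum {d : ℕ} (s : Multiset (Fin d → ℕ)) : tot s.sum = (s.map tot).sum := by
  induction s using Multiset.induction with
  | empty => simp [tot_zero]
  | cons a s ih => simp [tot_add, ih]

lemma card_le_tot {d : ℕ} {s : Multiset (Fin d → ℕ)} (h : ∀ a ∈ s, a ≠ 0) :
    Multiset.card s ≤ tot s.sum := by
  rw [tot_sum]
  calc Multiset.card s = Multiset.card (s.map tot) := by simp
  _ = Multiset.card (s.map tot) • 1 := by simp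
  _ ≤ (s.map tot).sum := Multiset.card_nsmul_le_sum (by
      intro x hx
      rcases Multiset.mem_map.mp hx with ⟨a, ha, rfl⟩
      exact one_le_tot (h a ha))

lemma tot_pp {d : ℕ} (hd : 2 ≤ d) (a b : ℕ) : tot (pp a b : Fin d → ℕ) = a + b := by
  unfold tot
  have h1 : (⟨0, by omega⟩ : Fin d) ≠ ⟨1, by omega⟩ := by simp [Fin.ext_iff]
  rw [show (Finset.univ : Finset (Fin d)) =
      insert (⟨0, by omega⟩ : Fin d) (insert (⟨1, by omega⟩ : Fin d)
        ((Finset.univ : Finset (Fin d)).filter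
        (fun i : Fin d => 2 ≤ (i : ℕ)))) from ?_]
  · rw [Finset.sum_insert, Finset.sum_insert]
    · rw [pp_apply0 rfl, pp_apply1 rfl]
      have : ∑ i ∈ (Finset.univ : Finset (Fin d)).filter (fun i : Fin d => 2 ≤ (i : ℕ)),
          pp a b i = 0 := by
        apply Finset.sum_eq_zero
        intro i hi
        exact pp_apply_ge (Finset.mem_filter.mp hi).2
      omega
    · intro hc
      exact absurd (Finset.mem_filter.mp hc).2 (by simp)
    · intro hc
      rcases Finset.mem_insert.mp hc with h | h
      · exact h1 h
      · exact absurd (Finset.mem_filter.mp h).2 (by simp)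
  · ext i
    simp only [Finset.mem_insert, Finset.mem_filter, Finset.mem_univ, true_and, true_iff]
    rcases Nat.lt_or_ge (i : ℕ) 2 with h | h
    · rcases Nat.lt_or_ge (i : ℕ) 1 with h' | h'
      · exact Or.inl (Fin.ext (by simp only [Fin.val_mk]; omega))
      · exact Or.inr (Or.inl (Fin.ext (by simp only [Fin.val_mk]; omega)))
    · exact Or.inr (Or.inr h)

lemma sum_coord {d : ℕ} (s : Multiset (Fin d → ℕ)) (i : Fin d) :
    s.sum i = (s.map (fun a => a i)).sum := by
  induction s using Multiset.induction with
  | empty => simp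
  | cons a s ih => simp [ih]

/-! ### The atoms -/

/-- The filler atom `(1,0,...,0)`. -/
def uA {d : ℕ} : Fin d → ℕ := pp 1 0

/-- The `v`-atom of level `S` with coefficient `n`. -/
def vA {d : ℕ} (S : Finset ℕ) (n : ℕ) : Fin d → ℕ :=
  pp (QE (Encodable.encode S)) (n * YY (Encodable.encode S))

/-- The `w`-atom of level `S` with coefficient `n`. -/
def wA {d : ℕ} (S : Finset ℕ) (n : ℕ) : Fin d → ℕ :=
  pp (QE (Encodable.encode S) - n + 2)
     ((3 * NE (Encodable.encode S) - n) * YY (Encodable.encode S))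

/-- The target element whose set of lengths will be `S`. -/
def xT {d : ℕ} (S : Finset ℕ) : Fin d → ℕ :=
  pp (2 * QE (Encodable.encode S))
     (3 * NE (Encodable.encode S) * YY (Encodable.encode S))

/-- The generating set: the filler, the far coordinate vectors, and all level atoms. -/
def AtomSet (d : ℕ) : Set (Fin d → ℕ) :=
  {x | x = uA} ∪ {x | ∃ i : Fin d, 2 ≤ (i : ℕ) ∧ x = Pi.single i 1} ∪
  {x | ∃ S n, FValid S ∧ n ∈ S ∧ (x = vA S n ∨ x = wA S n)}

/-- The monoid. -/
def Hm (d : ℕ) : AddSubmonoid (Fin d → ℕ) := AddSubmonoid.closure (AtomSet d)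

lemma mem_Hm_iff {d : ℕ} {x : Fin d → ℕ} :
    x ∈ Hm d ↔ ∃ s : Multiset (Fin d → ℕ), (∀ a ∈ s, a ∈ AtomSet d) ∧ s.sum = x := by
  constructor
  · intro h
    induction h using AddSubmonoid.closure_induction with
    | mem a ha => exact ⟨{a}, by simpa using ha, by simp⟩
    | zero => exact ⟨0, by simp, by simp⟩
    | add x y hx hy ihx ihy =>
      obtain ⟨s, hs, rfl⟩ := ihx
      obtain ⟨t, ht, rfl⟩ := ihy
      refine ⟨s + t, ?_, by simp⟩
      intro a ha
      rcases Multiset.mem_add.mp ha with h | h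
      exacts [hs a h, ht a h]
  · rintro ⟨s, h, rfl⟩
    exact AddSubmonoid.multiset_sum_mem _ s (fun a ha => AddSubmonoid.subset_closure (h a ha))

/-- Every atom in the generating set is nonzero. -/
lemma atomSet_ne_zero {d : ℕ} (hd : 2 ≤ d) {a : Fin d → ℕ} (ha : a ∈ AtomSet d) : a ≠ 0 := by
  have i0 : Fin d := ⟨0, by omega⟩
  rcases ha with (h | ⟨i, hi, rfl⟩) | ⟨S, n, hS, hn, h⟩
  · rw [Set.mem_setOf_eq] at h
    subst h
    intro hc
    have := congrFun hc (⟨0, by omega⟩ : Fin d)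
    simp only [uA] at this
    rw [pp_apply0 rfl] at this
    simp at this
  · intro hc
    have := congrFun hc i
    simp at this
  · have hQ := eight_le_QE (Encodable.encode S)
    rcases h with rfl | rfl
    · intro hc
      have := congrFun hc (⟨0, by omega⟩ : Fin d)
      simp only [vA] at this
      rw [pp_apply0 rfl] at this
      simp only [Pi.zero_apply] at this
      omega
    · intro hc
      have := congrFun hc (⟨0, by omega⟩ : Fin d)
      simp only [wA] at this
      rw [pp_apply0 rfl] at this
      simp only [Pi.zero_apply] at this
      omega

/-- If every member of a multiset has a preimage satisfying `P`, extract the preimage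
multiset. -/
lemma exists_preimage_multiset {α β : Type*} {P : β → Prop} (f : β → α) (s : Multiset α)
    (h : ∀ a ∈ s, ∃ b, P b ∧ a = f b) :
    ∃ t : Multiset β, (∀ b ∈ t, P b) ∧ t.map f = s := by
  induction s using Multiset.induction with
  | empty => exact ⟨0, by simp, by simp⟩
  | cons a s ih =>
    obtain ⟨b, hPb, rfl⟩ := h a (Multiset.mem_cons_self _ _)
    obtain ⟨t, ht, hmap⟩ := ih (fun x hx => h x (Multiset.mem_cons_of_mem hx))
    refine ⟨b ::ₘ t, ?_, by simp [hmap]⟩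
    intro c hc
    rcases Multiset.mem_cons.mp hc with rfl | hc
    exacts [hPb, ht c hc]

/-! ### Coordinates of level atoms -/

lemma uA_c0 {d : ℕ} {i : Fin d} (h : (i : ℕ) = 0) : (uA : Fin d → ℕ) i = 1 := by
  simp only [uA]; rw [pp_apply0 h]

lemma uA_c1 {d : ℕ} {i : Fin d} (h : (i : ℕ) = 1) : (uA : Fin d → ℕ) i = 0 := by
  simp only [uA]; rw [pp_apply1 h]

lemma level_coords {d : ℕ} {S' : Finset ℕ} (hS' : FValid S') {n : ℕ} (hn : n ∈ S')
    {a : Fin d → ℕ} (h : a = vA S' n ∨ a = wA S' n) {i0 i1 : Fin d}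
    (h0 : (i0 : ℕ) = 0) (h1 : (i1 : ℕ) = 1) :
    ∃ c, a i1 = c * YY (Encodable.encode S') ∧ 2 ≤ c ∧ c ≤ 3 * NE (Encodable.encode S')
      ∧ 1 ≤ a i0 := by
  have h2n := hS'.2 n hn
  have hnN := mem_le_NE hS' hn
  have hQ := eight_le_QE (Encodable.encode S')
  have hN := two_le_NE (Encodable.encode S')
  rcases h with rfl | rfl
  · refine ⟨n, ?_, h2n, by omega, ?_⟩
    · simp only [vA]; rw [pp_apply1 h1]
    · simp only [vA]; rw [pp_apply0 h0]; omega
  · refine ⟨3 * NE (Encodable.encode S') - n, ?_, by omega, by omega, ?_⟩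
    · simp only [wA]; rw [pp_apply1 h1]
    · simp only [wA]; rw [pp_apply0 h0]; omega

/-! ### The master structure lemma -/

lemma master {d : ℕ} (hd : 2 ≤ d) {S : Finset ℕ} (hS : FValid S) {s : Multiset (Fin d → ℕ)}
    (hmem : ∀ a ∈ s, a ∈ AtomSet d) {t0 m : ℕ}
    (hsum : s.sum = pp t0 (m * YY (Encodable.encode S)))
    (hm : m ≤ 3 * NE (Encodable.encode S)) (ht0 : t0 ≤ 2 * QE (Encodable.encode S)) :
    ∃ (cU : ℕ) (mv mw : Multiset ℕ), (∀ j ∈ mv, j ∈ S) ∧ (∀ j ∈ mw, j ∈ S) ∧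
      s = Multiset.replicate cU uA + Multiset.map (vA S) mv + Multiset.map (wA S) mw := by
  classical
  set e := Encodable.encode S with he
  set B := YY e with hB
  have hBpos : 1 ≤ B := YY_pos e
  have h0d : 0 < d := by omega
  have h1d : 1 < d := by omega
  set i0 : Fin d := ⟨0, h0d⟩ with hi0
  set i1 : Fin d := ⟨1, h1d⟩ with hi1
  have hci0 : (i0 : ℕ) = 0 := rfl
  have hci1 : (i1 : ℕ) = 1 := rfl
  -- Step A: no coordinate vectors occur
  have classify : ∀ a ∈ s, a = uA ∨
      ∃ S' n, FValid S' ∧ n ∈ S' ∧ (a = vA S' n ∨ a = wA S' n) := by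
    intro a ha
    rcases hmem a ha with (h | ⟨i, hig, rfl⟩) | h
    · exact Or.inl h
    · exfalso
      have hle : Pi.single i 1 ≤ s.sum :=
        Multiset.single_le_sum (fun x _ => zero_le) _ ha
      have h2 := (Pi.le_def.mp hle) i
      rw [hsum, pp_apply_ge hig] at h2
      simp at h2
    · exact Or.inr h
  -- partition
  have hsplit := Multiset.filter_add_not (fun a => a = uA) s
  set sU := Multiset.filter (fun a => a = uA) s with hsUdef
  set sL := Multiset.filter (fun a => ¬ a = uA) s with hsLdef
  have hUall : ∀ a ∈ sU, a = uA := fun a ha => (Multiset.mem_filter.mp ha).2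
  have hLmem : ∀ a ∈ sL, a ∈ s := fun a ha => (Multiset.mem_filter.mp ha).1
  have hLlevel : ∀ a ∈ sL, ∃ S' n, FValid S' ∧ n ∈ S' ∧ (a = vA S' n ∨ a = wA S' n) := by
    intro a ha
    rcases classify a (hLmem a ha) with h | h
    · exact absurd h (Multiset.mem_filter.mp ha).2
    · exact h
  set P : (Fin d → ℕ) → Prop := fun a => ∃ n ∈ S, a = vA S n ∨ a = wA S n with hPdef
  have hsplit2 := Multiset.filter_add_not P sL
  set sE := Multiset.filter P sL with hsEdef
  set sR := Multiset.filter (fun a => ¬ P a) sL with hsRdef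
  -- map/sum splitting
  have hmapsplit : ∀ f : (Fin d → ℕ) → ℕ,
      Multiset.map f s = Multiset.map f sU + (Multiset.map f sE + Multiset.map f sR) := by
    intro f
    rw [← Multiset.map_add, ← Multiset.map_add, hsplit2, hsplit]
  have hsum1 : (Multiset.map (fun a => a i1) s).sum = m * B := by
    rw [← sum_coord, hsum, pp_apply1 hci1]
  have hsum0 : (Multiset.map (fun a => a i0) s).sum = t0 := by
    rw [← sum_coord, hsum, pp_apply0 hci0]
  have key1 : (Multiset.map (fun a => a i1) sE).sum + (Multiset.map (fun a => a i1) sR).sum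
      = m * B := by
    rw [hmapsplit (fun a => a i1), Multiset.sum_add, Multiset.sum_add] at hsum1
    have hz : (Multiset.map (fun a => a i1) sU).sum = 0 := by
      apply Multiset.sum_eq_zero
      intro x hx
      rcases Multiset.mem_map.mp hx with ⟨a, ha, rfl⟩
      rw [hUall a ha]
      exact uA_c1 hci1
    rw [hz, zero_add] at hsum1
    exact hsum1
  have key0 : Multiset.card sU + ((Multiset.map (fun a => a i0) sE).sum
      + (Multiset.map (fun a => a i0) sR).sum) = t0 := by
    rw [hmapsplit (fun a => a i0), Multiset.sum_add, Multiset.sum_add] at hsum0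
    have hz : (Multiset.map (fun a => a i0) sU).sum = Multiset.card sU := by
      have hone : ∀ x ∈ Multiset.map (fun a => a i0) sU, x = 1 := by
        intro x hx
        rcases Multiset.mem_map.mp hx with ⟨a, ha, rfl⟩
        rw [hUall a ha]
        exact uA_c0 hci0
      rw [Multiset.eq_replicate_card.mpr hone]
      simp
    rw [hz] at hsum0
    exact hsum0
  -- clean variable names for the four sums
  obtain ⟨E1, hE1⟩ : ∃ x, x = (Multiset.map (fun a => a i1) sE).sum := ⟨_, rfl⟩
  obtain ⟨R1, hR1⟩ : ∃ x, x = (Multiset.map (fun a => a i1) sR).sum := ⟨_, rfl⟩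
  obtain ⟨E0, hE0⟩ : ∃ x, x = (Multiset.map (fun a => a i0) sE).sum := ⟨_, rfl⟩
  obtain ⟨R0, hR0⟩ : ∃ x, x = (Multiset.map (fun a => a i0) sR).sum := ⟨_, rfl⟩
  rw [← hE1, ← hR1] at key1
  rw [← hE0, ← hR0] at key0
  -- properties of residual (cross-level) atoms
  have hR : ∀ a ∈ sR, ∃ e', e' < e ∧ ∃ c, a i1 = c * YY e' ∧ 2 ≤ c ∧
      c ≤ 3 * NE e' ∧ 1 ≤ a i0 := by
    intro a ha
    have haL : a ∈ sL := (Multiset.mem_filter.mp ha).1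
    have hnP : ¬ P a := (Multiset.mem_filter.mp ha).2
    obtain ⟨S', n, hS', hn, hform⟩ := hLlevel a haL
    obtain ⟨c, hc1, hc2, hc3, hc0⟩ := level_coords hS' hn hform hci0 hci1
    rcases lt_trichotomy (Encodable.encode S') e with h | h | h
    · exact ⟨Encodable.encode S', h, c, hc1, hc2, hc3, hc0⟩
    · exfalso
      have hSS : S' = S := Encodable.encode_injective h
      subst hSS
      exact hnP ⟨n, hn, hform⟩
    · exfalso
      have hle : a ≤ s.sum := Multiset.single_le_sum (fun x _ => zero_le) _ (hLmem a haL)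
      have h1 : a i1 ≤ m * B := by
        have h2 := (Pi.le_def.mp hle) i1
        rwa [hsum, pp_apply1 hci1] at h2
      have h2 : m * B < YY (Encodable.encode S') :=
        lt_of_le_of_lt (Nat.mul_le_mul_right _ hm) (factA h)
      have h3 : YY (Encodable.encode S') ≤ a i1 := by
        rw [hc1]
        calc YY (Encodable.encode S') = 1 * YY (Encodable.encode S') := (one_mul _).symm
        _ ≤ c * YY (Encodable.encode S') :=
            Nat.mul_le_mul_right _ (le_trans one_le_two hc2)
      linarith
  -- the residual is empty
  have hsR0 : sR = 0 := by
    by_contra hne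
    obtain ⟨a0, ha0⟩ := Multiset.exists_mem_of_ne_zero hne
    obtain ⟨e0, he0, c0, hc01, hc02, hc03, hc00⟩ := hR a0 ha0
    have he1 : 1 ≤ e := by clear * - he0; omega
    set M0 := 3 * NE (e-1) * YY (e-1) with hM0
    have hbound : ∀ x ∈ Multiset.map (fun a => a i1) sR, x ≤ M0 := by
      intro x hx
      rcases Multiset.mem_map.mp hx with ⟨a, ha, rfl⟩
      obtain ⟨e', he', c, hc1, hc2, hc3, hc0⟩ := hR a ha
      rw [hc1]
      calc c * YY e' ≤ (3 * NE e') * YY e' := Nat.mul_le_mul_right _ hc3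
      _ ≤ M0 := factAux (by clear * - he' he1; omega)
    have hcardR : Multiset.card sR ≤ R0 := by
      rw [hR0]
      have h1 : Multiset.card (Multiset.map (fun a => a i0) sR) • 1
          ≤ (Multiset.map (fun a => a i0) sR).sum := by
        apply Multiset.card_nsmul_le_sum
        intro x hx
        rcases Multiset.mem_map.mp hx with ⟨a, ha, rfl⟩
        obtain ⟨e', he', c, hc1, hc2, hc3, hc0⟩ := hR a ha
        exact hc0
      simpa using h1
    have hR1le : R1 ≤ Multiset.card sR * M0 := by
      rw [hR1]
      have := Multiset.sum_le_card_nsmul (Multiset.map (fun a => a i1) sR) M0 hbound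
      simpa [smul_eq_mul] using this
    have hcard2 : Multiset.card sR ≤ 2 * QE e := by clear * - hcardR key0 ht0; omega
    have hR1lt : R1 < B := by
      have h2 : R1 ≤ 2 * QE e * M0 :=
        le_trans hR1le (Nat.mul_le_mul_right _ hcard2)
      have h3 : 2 * QE e * M0 < B := by
        rw [hM0, hB]
        exact factB (by clear * - he1; omega)
      exact lt_of_le_of_lt h2 h3
    -- divisibility of the level-e part
    have hdvd : B ∣ E1 := by
      rw [hE1]
      apply Multiset.dvd_sum
      intro x hx
      rcases Multiset.mem_map.mp hx with ⟨a, ha, rfl⟩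
      obtain ⟨n, hn, hform⟩ := (Multiset.mem_filter.mp ha).2
      obtain ⟨c, hc1, _, _, _⟩ := level_coords hS hn hform hci0 hci1
      rw [hc1]
      exact Dvd.intro_left c rfl
    obtain ⟨K, hK⟩ := hdvd
    have h6 : B * K + R1 = m * B := by rw [← hK]; exact key1
    have h8 : R1 = m * B - B * K := by
      rw [← h6, Nat.add_sub_cancel_left]
    have h8' : R1 = (m - K) * B := by
      rw [h8, mul_comm B K, ← Nat.sub_mul]
    have h9 : m - K = 0 := by
      by_contra hc
      have h10 : 1 * B ≤ (m - K) * B :=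
        Nat.mul_le_mul_right B (by clear * - hc; omega)
      rw [one_mul] at h10
      linarith
    have hR10 : R1 = 0 := by rw [h8', h9, zero_mul]
    have hmem0 : a0 i1 ≤ R1 := by
      rw [hR1]
      exact Multiset.single_le_sum (fun x _ => Nat.zero_le x) _
        (Multiset.mem_map_of_mem _ ha0)
    have hbig : 2 * 1 ≤ a0 i1 := by
      rw [hc01]
      exact Nat.mul_le_mul hc02 (YY_pos e0)
    linarith
  -- split the level part into v's and w's
  set PV : (Fin d → ℕ) → Prop := fun a => ∃ n ∈ S, a = vA S n with hPVdef
  have hsplit3 := Multiset.filter_add_not PV sE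
  set sV := Multiset.filter PV sE with hsVdef
  set sW := Multiset.filter (fun a => ¬ PV a) sE with hsWdef
  have hV : ∀ a ∈ sV, ∃ n, n ∈ S ∧ a = vA S n := by
    intro a ha
    obtain ⟨n, hn, hf⟩ := (Multiset.mem_filter.mp ha).2
    exact ⟨n, hn, hf⟩
  have hW : ∀ a ∈ sW, ∃ n, n ∈ S ∧ a = wA S n := by
    intro a ha
    have haE : a ∈ sE := (Multiset.mem_filter.mp ha).1
    have hnPV : ¬ PV a := (Multiset.mem_filter.mp ha).2
    obtain ⟨n, hn, hf | hf⟩ := (Multiset.mem_filter.mp haE).2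
    · exact absurd ⟨n, hn, hf⟩ hnPV
    · exact ⟨n, hn, hf⟩
  obtain ⟨mv, hmv, hmapv⟩ := exists_preimage_multiset (vA S) sV hV
  obtain ⟨mw, hmw, hmapw⟩ := exists_preimage_multiset (wA S) sW hW
  refine ⟨Multiset.card sU, mv, mw, hmv, hmw, ?_⟩
  have hsUrep : sU = Multiset.replicate (Multiset.card sU) uA :=
    Multiset.eq_replicate_card.mpr hUall
  calc s = sU + sL := hsplit.symm
  _ = sU + (sE + sR) := by rw [hsplit2]
  _ = sU + ((sV + sW) + 0) := by rw [hsR0, hsplit3]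
  _ = Multiset.replicate (Multiset.card sU) uA + Multiset.map (vA S) mv
      + Multiset.map (wA S) mw := by
    rw [add_zero, ← hsUrep, hmapv, hmapw, add_assoc]

/-! ### Sums of structured multisets -/

lemma sum_replicate_uA {d : ℕ} (c : ℕ) :
    (Multiset.replicate c (uA : Fin d → ℕ)).sum = pp c 0 := by
  induction c with
  | zero => simp [pp_zero]
  | succ c ih =>
    rw [Multiset.replicate_succ, Multiset.sum_cons, ih]
    simp only [uA]
    rw [pp_add, Nat.add_comm 1 c]

lemma sum_map_vA {d : ℕ} (S : Finset ℕ) (t : Multiset ℕ) :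
    (Multiset.map (vA S) t).sum =
      (pp (QE (Encodable.encode S) * Multiset.card t)
        (t.sum * YY (Encodable.encode S)) : Fin d → ℕ) := by
  induction t using Multiset.induction with
  | empty => simp [pp_zero]
  | cons n t ih =>
    rw [Multiset.map_cons, Multiset.sum_cons, ih]
    have h1 : QE (Encodable.encode S) * Multiset.card (n ::ₘ t)
        = QE (Encodable.encode S) + QE (Encodable.encode S) * Multiset.card t := by
      rw [Multiset.card_cons]; ring
    have h2 : (n ::ₘ t).sum * YY (Encodable.encode S)
        = n * YY (Encodable.encode S) + t.sum * YY (Encodable.encode S) := by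
      rw [Multiset.sum_cons]; ring
    rw [h1, h2]
    simp only [vA]
    rw [pp_add]

lemma sum_map_wA {d : ℕ} (S : Finset ℕ) (t : Multiset ℕ) :
    (Multiset.map (wA S) t).sum =
      (pp ((Multiset.map (fun j => QE (Encodable.encode S) - j + 2) t).sum)
        ((Multiset.map (fun j => 3 * NE (Encodable.encode S) - j) t).sum
          * YY (Encodable.encode S)) : Fin d → ℕ) := by
  induction t using Multiset.induction with
  | empty => simp [pp_zero]
  | cons n t ih =>
    rw [Multiset.map_cons, Multiset.sum_cons, ih]
    rw [Multiset.map_cons, Multiset.sum_cons, Multiset.map_cons, Multiset.sum_cons]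
    have h2 : ((3 * NE (Encodable.encode S) - n)
          + (Multiset.map (fun j => 3 * NE (Encodable.encode S) - j) t).sum)
          * YY (Encodable.encode S)
        = (3 * NE (Encodable.encode S) - n) * YY (Encodable.encode S)
          + (Multiset.map (fun j => 3 * NE (Encodable.encode S) - j) t).sum
            * YY (Encodable.encode S) := by ring
    rw [h2]
    simp only [wA]
    rw [pp_add]

lemma structure_eqs {d : ℕ} (hd : 2 ≤ d) {S : Finset ℕ} (cU : ℕ) (mv mw : Multiset ℕ)
    {t0 t1 : ℕ}
    (h : (Multiset.replicate cU uA + Multiset.map (vA S) mv + Multiset.map (wA S) mw).sum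
       = (pp t0 t1 : Fin d → ℕ)) :
    cU + QE (Encodable.encode S) * Multiset.card mv
        + (Multiset.map (fun j => QE (Encodable.encode S) - j + 2) mw).sum = t0 ∧
    mv.sum * YY (Encodable.encode S)
        + (Multiset.map (fun j => 3 * NE (Encodable.encode S) - j) mw).sum
          * YY (Encodable.encode S) = t1 := by
  rw [Multiset.sum_add, Multiset.sum_add, sum_replicate_uA, sum_map_vA, sum_map_wA,
      pp_add, pp_add] at h
  have h2 := pp_inj hd h
  constructor
  · exact h2.1
  · have h3 := h2.2
    rwa [zero_add] at h3

/-! ### Refined structure: clean arithmetic data -/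

lemma refined {d : ℕ} (hd : 2 ≤ d) {S : Finset ℕ} (hS : FValid S) {s : Multiset (Fin d → ℕ)}
    (hmem : ∀ a ∈ s, a ∈ AtomSet d) {t0 m : ℕ}
    (hsum : s.sum = pp t0 (m * YY (Encodable.encode S)))
    (hm : m ≤ 3 * NE (Encodable.encode S)) (ht0 : t0 ≤ 2 * QE (Encodable.encode S)) :
    ∃ cU cv cw sv V0 W0 W1 : ℕ,
      Multiset.card s = cU + cv + cw ∧
      cU + V0 + W0 = t0 ∧
      sv + W1 = m ∧
      (cv = 0 → V0 = 0 ∧ sv = 0) ∧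
      (cv = 1 → V0 = QE (Encodable.encode S) ∧ sv ∈ S) ∧
      (2 ≤ cv → 2 * QE (Encodable.encode S) ≤ V0) ∧
      (3 ≤ cv → 3 * QE (Encodable.encode S) ≤ V0) ∧
      (cv ≤ 2 → sv ≤ 2 * NE (Encodable.encode S)) ∧
      (cw = 0 → W1 = 0 ∧ W0 = 0) ∧
      (cw = 1 → ∃ j, j ∈ S ∧ 2 ≤ j ∧ j ≤ NE (Encodable.encode S) ∧
        W1 = 3 * NE (Encodable.encode S) - j ∧ W0 = QE (Encodable.encode S) - j + 2) ∧
      (2 ≤ cw → 4 * NE (Encodable.encode S) ≤ W1) := by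
  obtain ⟨cU, mv, mw, hmv, hmw, rfl⟩ := master hd hS hmem hsum hm ht0
  obtain ⟨h0raw, h1raw⟩ := structure_eqs hd cU mv mw hsum
  have hBpos : 0 < YY (Encodable.encode S) := YY_pos _
  refine ⟨cU, Multiset.card mv, Multiset.card mw, mv.sum,
    QE (Encodable.encode S) * Multiset.card mv,
    (Multiset.map (fun j => QE (Encodable.encode S) - j + 2) mw).sum,
    (Multiset.map (fun j => 3 * NE (Encodable.encode S) - j) mw).sum,
    ?_, h0raw, ?_, ?_, ?_, ?_, ?_, ?_, ?_, ?_, ?_⟩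
  · simp
  · -- sv + W1 = m
    apply Nat.eq_of_mul_eq_mul_right hBpos
    rw [add_mul]
    exact h1raw
  · -- cv = 0
    intro h
    rw [Multiset.card_eq_zero.mp h]
    simp
  · -- cv = 1
    intro h
    obtain ⟨k, hk⟩ := Multiset.card_eq_one.mp h
    subst hk
    refine ⟨by simp, ?_⟩
    simp only [Multiset.sum_singleton]
    exact hmv k (Multiset.mem_singleton_self k)
  · -- 2 ≤ cv
    intro h
    calc 2 * QE (Encodable.encode S) ≤ Multiset.card mv * QE (Encodable.encode S) :=
      Nat.mul_le_mul_right _ h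
    _ = QE (Encodable.encode S) * Multiset.card mv := Nat.mul_comm _ _
  · -- 3 ≤ cv
    intro h
    calc 3 * QE (Encodable.encode S) ≤ Multiset.card mv * QE (Encodable.encode S) :=
      Nat.mul_le_mul_right _ h
    _ = QE (Encodable.encode S) * Multiset.card mv := Nat.mul_comm _ _
  · -- cv ≤ 2
    intro h
    have h1 : mv.sum ≤ Multiset.card mv * NE (Encodable.encode S) := by
      have := Multiset.sum_le_card_nsmul mv (NE (Encodable.encode S))
        (fun j hj => mem_le_NE hS (hmv j hj))
      simpa [smul_eq_mul] using this
    have h2 : Multiset.card mv * NE (Encodable.encode S)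
        ≤ 2 * NE (Encodable.encode S) := Nat.mul_le_mul_right _ h
    exact le_trans h1 h2
  · -- cw = 0
    intro h
    rw [Multiset.card_eq_zero.mp h]
    simp
  · -- cw = 1
    intro h
    obtain ⟨j, hj⟩ := Multiset.card_eq_one.mp h
    subst hj
    have hjS : j ∈ S := hmw j (Multiset.mem_singleton_self j)
    exact ⟨j, hjS, hS.2 j hjS, mem_le_NE hS hjS, by simp, by simp⟩
  · -- 2 ≤ cw
    intro h
    have h1 : Multiset.card mw * (2 * NE (Encodable.encode S))
        ≤ (Multiset.map (fun j => 3 * NE (Encodable.encode S) - j) mw).sum := by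
      have := Multiset.card_nsmul_le_sum
        (s := Multiset.map (fun j => 3 * NE (Encodable.encode S) - j) mw)
        (a := 2 * NE (Encodable.encode S)) ?_
      · simpa [smul_eq_mul] using this
      · intro x hx
        rcases Multiset.mem_map.mp hx with ⟨j, hj, rfl⟩
        have h2j := hS.2 j (hmw j hj)
        have hjN := mem_le_NE hS (hmw j hj)
        clear * - h2j hjN
        omega
    have h2 : 2 * (2 * NE (Encodable.encode S))
        ≤ Multiset.card mw * (2 * NE (Encodable.encode S)) :=
      Nat.mul_le_mul_right _ h
    have h3 := le_trans h2 h1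
    clear * - h3
    omega

/-! ### The three target computations -/

lemma card_mem_of_sum_xT {d : ℕ} (hd : 2 ≤ d) {S : Finset ℕ} (hS : FValid S)
    {s : Multiset (Fin d → ℕ)} (hmem : ∀ a ∈ s, a ∈ AtomSet d) (hsum : s.sum = xT S) :
    Multiset.card s ∈ S := by
  have hN2 := two_le_NE (Encodable.encode S)
  have hQN : QE (Encodable.encode S) = 4 * NE (Encodable.encode S) := rfl
  have hsum' : s.sum = pp (2 * QE (Encodable.encode S))
      ((3 * NE (Encodable.encode S)) * YY (Encodable.encode S)) := hsum
  obtain ⟨cU, cv, cw, sv, V0, W0, W1, hcard, h0, h1, hcv0, hcv1, hcv2, hcv3, hsv2,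
      hcw0, hcw1, hcw2⟩ := refined hd hS hmem hsum' (le_refl _) (le_refl _)
  rcases Nat.lt_or_ge cw 2 with hcwlt | hcwge
  · rcases Nat.lt_or_ge cw 1 with hcw00 | hcw11
    · -- cw = 0 : impossible
      exfalso
      obtain ⟨hW1, hW0⟩ := hcw0 (by omega)
      have hcvge : 3 ≤ cv := by
        by_contra hc
        have := hsv2 (by omega)
        omega
      have := hcv3 hcvge
      omega
    · -- cw = 1
      obtain ⟨j, hjS, h2j, hjN, hW1, hW0⟩ := hcw1 (by omega)
      have hcvne : cv ≠ 0 := by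
        intro h
        have := (hcv0 h).2
        omega
      rcases Nat.lt_or_ge cv 2 with hcvlt | hcvge
      · obtain ⟨hV0, _⟩ := hcv1 (by omega)
        have hj : Multiset.card s = j := by omega
        rwa [hj]
      · exfalso
        have := hcv2 hcvge
        omega
  · -- 2 ≤ cw : impossible
    exfalso
    have := hcw2 hcwge
    omega

lemma card_eq_one_of_sum_vA {d : ℕ} (hd : 2 ≤ d) {S : Finset ℕ} (hS : FValid S)
    {n : ℕ} (hn : n ∈ S) {s : Multiset (Fin d → ℕ)}
    (hmem : ∀ a ∈ s, a ∈ AtomSet d) (hsum : s.sum = vA S n) :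
    Multiset.card s = 1 := by
  have hN2 := two_le_NE (Encodable.encode S)
  have hQN : QE (Encodable.encode S) = 4 * NE (Encodable.encode S) := rfl
  have h2n := hS.2 n hn
  have hnN := mem_le_NE hS hn
  have hsum' : s.sum = pp (QE (Encodable.encode S))
      (n * YY (Encodable.encode S)) := hsum
  obtain ⟨cU, cv, cw, sv, V0, W0, W1, hcard, h0, h1, hcv0, hcv1, hcv2, hcv3, hsv2,
      hcw0, hcw1, hcw2⟩ := refined hd hS hmem hsum' (by omega) (by omega)
  rcases Nat.lt_or_ge cw 2 with hcwlt | hcwge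
  · rcases Nat.lt_or_ge cw 1 with hcw00 | hcw11
    · -- cw = 0
      obtain ⟨hW1, hW0⟩ := hcw0 (by omega)
      have hcvne : cv ≠ 0 := by
        intro h
        have := (hcv0 h).2
        omega
      rcases Nat.lt_or_ge cv 2 with hcvlt | hcvge
      · obtain ⟨hV0, _⟩ := hcv1 (by omega)
        omega
      · exfalso
        have := hcv2 hcvge
        omega
    · -- cw = 1 : impossible
      exfalso
      obtain ⟨j, hjS, h2j, hjN, hW1, hW0⟩ := hcw1 (by omega)
      omega
  · -- 2 ≤ cw : impossible
    exfalso
    have := hcw2 hcwge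
    omega

lemma card_eq_one_of_sum_wA {d : ℕ} (hd : 2 ≤ d) {S : Finset ℕ} (hS : FValid S)
    {n : ℕ} (hn : n ∈ S) {s : Multiset (Fin d → ℕ)}
    (hmem : ∀ a ∈ s, a ∈ AtomSet d) (hsum : s.sum = wA S n) :
    Multiset.card s = 1 := by
  have hN2 := two_le_NE (Encodable.encode S)
  have hQN : QE (Encodable.encode S) = 4 * NE (Encodable.encode S) := rfl
  have h2n := hS.2 n hn
  have hnN := mem_le_NE hS hn
  have hsum' : s.sum = pp (QE (Encodable.encode S) - n + 2)
      ((3 * NE (Encodable.encode S) - n) * YY (Encodable.encode S)) := hsum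
  obtain ⟨cU, cv, cw, sv, V0, W0, W1, hcard, h0, h1, hcv0, hcv1, hcv2, hcv3, hsv2,
      hcw0, hcw1, hcw2⟩ := refined hd hS hmem hsum' (by omega) (by omega)
  rcases Nat.lt_or_ge cw 2 with hcwlt | hcwge
  · rcases Nat.lt_or_ge cw 1 with hcw00 | hcw11
    · -- cw = 0 : impossible
      exfalso
      obtain ⟨hW1, hW0⟩ := hcw0 (by omega)
      have hcvne : cv ≠ 0 := by
        intro h
        have := (hcv0 h).2
        omega
      rcases Nat.lt_or_ge cv 2 with hcvlt | hcvge
      · obtain ⟨hV0, hsvS⟩ := hcv1 (by omega)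
        have hsvN : sv ≤ NE (Encodable.encode S) := mem_le_NE hS hsvS
        omega
      · have := hcv2 hcvge
        omega
    · -- cw = 1
      obtain ⟨j, hjS, h2j, hjN, hW1, hW0⟩ := hcw1 (by omega)
      rcases Nat.lt_or_ge cv 1 with hcvlt | hcvge
      · -- cv = 0
        obtain ⟨hV0, hsv⟩ := hcv0 (by omega)
        omega
      · -- cv ≥ 1 : impossible
        exfalso
        rcases Nat.lt_or_ge cv 2 with hcvlt2 | hcvge2
        · obtain ⟨hV0, _⟩ := hcv1 (by omega)
          omega
        · have := hcv2 hcvge2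
          omega
  · -- 2 ≤ cw : impossible
    exfalso
    have := hcw2 hcwge
    omega

/-! ### Atoms of the monoid -/

lemma sum_ne_zero_of_atoms {d : ℕ} (hd : 2 ≤ d) {t : Multiset (Fin d → ℕ)} (ht : t ≠ 0)
    (hmem : ∀ a ∈ t, a ∈ AtomSet d) : t.sum ≠ 0 := by
  intro hc
  have h1 : 0 < Multiset.card t := Multiset.card_pos.mpr ht
  have h2 := card_le_tot (s := t) (fun x hx => atomSet_ne_zero hd (hmem x hx))
  rw [hc, tot_zero] at h2
  omega

lemma atomSet_isAtom {d : ℕ} (hd : 2 ≤ d) {a : Fin d → ℕ} (ha : a ∈ AtomSet d) :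
    IsAtomOf (Hm d) a := by
  refine ⟨AddSubmonoid.subset_closure ha, atomSet_ne_zero hd ha, ?_⟩
  intro y hy z hz hsum
  by_contra hc
  push_neg at hc
  obtain ⟨hy0, hz0⟩ := hc
  obtain ⟨sy, hsy, hsy2⟩ := mem_Hm_iff.mp hy
  obtain ⟨sz, hsz, hsz2⟩ := mem_Hm_iff.mp hz
  have hsyne : sy ≠ 0 := by rintro rfl; rw [Multiset.sum_zero] at hsy2; exact hy0 hsy2.symm
  have hszne : sz ≠ 0 := by rintro rfl; rw [Multiset.sum_zero] at hsz2; exact hz0 hsz2.symm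
  have hmem2 : ∀ x ∈ sy + sz, x ∈ AtomSet d := by
    intro x hx
    rcases Multiset.mem_add.mp hx with h | h
    exacts [hsy x h, hsz x h]
  have hsum2 : (sy + sz).sum = a := by
    rw [Multiset.sum_add, hsy2, hsz2, ← hsum]
  have hcard : 2 ≤ Multiset.card (sy + sz) := by
    rw [Multiset.card_add]
    have h1 : 0 < Multiset.card sy := Multiset.card_pos.mpr hsyne
    have h2 : 0 < Multiset.card sz := Multiset.card_pos.mpr hszne
    omega
  rcases ha with (h | ⟨i, hi, h⟩) | ⟨S, n, hS, hn, hf⟩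
  · rw [Set.mem_setOf_eq] at h
    subst h
    have h3 := card_le_tot (s := sy + sz) (fun x hx => atomSet_ne_zero hd (hmem2 x hx))
    rw [hsum2] at h3
    have htot : tot (uA : Fin d → ℕ) = 1 := by
      simp only [uA]; rw [tot_pp hd]
    omega
  · subst h
    have h3 := card_le_tot (s := sy + sz) (fun x hx => atomSet_ne_zero hd (hmem2 x hx))
    rw [hsum2] at h3
    have htot : tot (Pi.single i 1 : Fin d → ℕ) = 1 := by
      simp [tot]
    omega
  · rcases hf with rfl | rfl
    · have := card_eq_one_of_sum_vA hd hS hn hmem2 hsum2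
      omega
    · have := card_eq_one_of_sum_wA hd hS hn hmem2 hsum2
      omega

lemma isAtom_mem_atomSet {d : ℕ} (hd : 2 ≤ d) {x : Fin d → ℕ} (hx : IsAtomOf (Hm d) x) :
    x ∈ AtomSet d := by
  obtain ⟨hxH, hx0, hdec⟩ := hx
  obtain ⟨s, hs, rfl⟩ := mem_Hm_iff.mp hxH
  rcases Nat.lt_or_ge (Multiset.card s) 2 with h2 | h2
  · rcases Nat.lt_or_ge (Multiset.card s) 1 with h1 | h1
    · exfalso
      have : s = 0 := Multiset.card_eq_zero.mp (by omega)
      subst this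
      exact hx0 (by simp)
    · have : Multiset.card s = 1 := by omega
      obtain ⟨a, rfl⟩ := Multiset.card_eq_one.mp this
      rw [Multiset.sum_singleton]
      exact hs a (Multiset.mem_singleton_self a)
  · exfalso
    have h1 : 0 < Multiset.card s := by omega
    obtain ⟨a, ha⟩ := Multiset.card_pos_iff_exists_mem.mp h1
    obtain ⟨t, rfl⟩ := Multiset.exists_cons_of_mem ha
    have htne : t ≠ 0 := by
      rintro rfl
      simp at h2
    have hmt : ∀ b ∈ t, b ∈ AtomSet d := fun b hb => hs b (Multiset.mem_cons_of_mem hb)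
    have hdec2 := hdec a (AddSubmonoid.subset_closure (hs a (Multiset.mem_cons_self a t)))
      t.sum (AddSubmonoid.multiset_sum_mem _ t
        (fun b hb => AddSubmonoid.subset_closure (hmt b hb)))
      (by rw [Multiset.sum_cons])
    rcases hdec2 with h' | h'
    · exact atomSet_ne_zero hd (hs a (Multiset.mem_cons_self a t)) h'
    · exact sum_ne_zero_of_atoms hd htne hmt h'

/-! ### Sets of lengths -/

lemma lengths_zero {d : ℕ} (hd : 2 ≤ d) : LengthsOf (Hm d) 0 = {0} := by
  ext l
  simp only [LengthsOf, Set.mem_setOf_eq, Set.mem_singleton_iff]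
  constructor
  · rintro ⟨s, hs, hsum, rfl⟩
    by_contra hc
    have hne : s ≠ 0 := by
      intro h
      subst h
      simp at hc
    obtain ⟨a, ha⟩ := Multiset.exists_mem_of_ne_zero hne
    have hle : a ≤ s.sum := Multiset.single_le_sum (fun x _ => zero_le) _ ha
    rw [hsum] at hle
    exact (hs a ha).2.1 (le_antisymm hle zero_le)
  · rintro rfl
    exact ⟨0, by simp, by simp, by simp⟩

lemma lengths_atom {d : ℕ} (hd : 2 ≤ d) {x : Fin d → ℕ} (hx : IsAtomOf (Hm d) x) :
    LengthsOf (Hm d) x = {1} := by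
  ext l
  simp only [LengthsOf, Set.mem_setOf_eq, Set.mem_singleton_iff]
  constructor
  · rintro ⟨s, hs, hsum, rfl⟩
    rcases Nat.lt_or_ge (Multiset.card s) 2 with h2 | h2
    · rcases Nat.lt_or_ge (Multiset.card s) 1 with h1 | h1
      · exfalso
        have : s = 0 := Multiset.card_eq_zero.mp (by omega)
        subst this
        exact hx.2.1 (by rw [← hsum]; simp)
      · omega
    · exfalso
      have h1 : 0 < Multiset.card s := by omega
      obtain ⟨a, ha⟩ := Multiset.card_pos_iff_exists_mem.mp h1
      obtain ⟨t, rfl⟩ := Multiset.exists_cons_of_mem ha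
      have htne : t ≠ 0 := by
        rintro rfl
        simp at h2
      have hdec := hx.2.2 a (hs a ha).1 t.sum
        (AddSubmonoid.multiset_sum_mem _ t
          (fun b hb => (hs b (Multiset.mem_cons_of_mem hb)).1))
        (by rw [← hsum, Multiset.sum_cons])
      rcases hdec with h' | h'
      · exact (hs a ha).2.1 h'
      · obtain ⟨b, hb⟩ := Multiset.exists_mem_of_ne_zero htne
        have hble : b ≤ t.sum := Multiset.single_le_sum (fun x _ => zero_le) _ hb
        rw [h'] at hble
        exact (hs b (Multiset.mem_cons_of_mem hb)).2.1 (le_antisymm hble zero_le)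
  · rintro rfl
    exact ⟨{x}, by simpa using hx, by simp, by simp⟩

lemma lengths_nonempty {d : ℕ} (hd : 2 ≤ d) {x : Fin d → ℕ} (hx : x ∈ Hm d) :
    (LengthsOf (Hm d) x).Nonempty := by
  obtain ⟨s, hs, rfl⟩ := mem_Hm_iff.mp hx
  exact ⟨Multiset.card s, s, fun a ha => atomSet_isAtom hd (hs a ha), rfl, rfl⟩

lemma lengths_finite {d : ℕ} (x : Fin d → ℕ) : (LengthsOf (Hm d) x).Finite := by
  apply Set.Finite.subset (Set.finite_Iic (tot x))
  rintro l ⟨s, hs, hsum, rfl⟩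
  have := card_le_tot (s := s) (fun a ha => (hs a ha).2.1)
  rw [hsum] at this
  exact Set.mem_Iic.mpr this

lemma lengths_ge_two {d : ℕ} (hd : 2 ≤ d) {x : Fin d → ℕ} (hx0 : x ≠ 0)
    (hxa : ¬ IsAtomOf (Hm d) x) : ∀ l ∈ LengthsOf (Hm d) x, 2 ≤ l := by
  rintro l ⟨s, hs, hsum, rfl⟩
  rcases Nat.lt_or_ge (Multiset.card s) 2 with h2 | h2
  · exfalso
    rcases Nat.lt_or_ge (Multiset.card s) 1 with h1 | h1
    · have : s = 0 := Multiset.card_eq_zero.mp (by omega)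
      subst this
      exact hx0 (by rw [← hsum]; simp)
    · have : Multiset.card s = 1 := by omega
      obtain ⟨a, rfl⟩ := Multiset.card_eq_one.mp this
      rw [Multiset.sum_singleton] at hsum
      exact hxa (hsum ▸ hs a (Multiset.mem_singleton_self a))
  · exact h2

lemma xT_mem_Hm {d : ℕ} (hd : 2 ≤ d) {S : Finset ℕ} (hS : FValid S) : (xT S : Fin d → ℕ) ∈ Hm d := by
  obtain ⟨n, hn⟩ := hS.1
  have h2n := hS.2 n hn
  have hnN := mem_le_NE hS hn
  have hN2 := two_le_NE (Encodable.encode S)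
  have hQN : QE (Encodable.encode S) = 4 * NE (Encodable.encode S) := rfl
  apply mem_Hm_iff.mpr
  refine ⟨vA S n ::ₘ wA S n ::ₘ Multiset.replicate (n - 2) uA, ?_, ?_⟩
  · intro a ha
    rcases Multiset.mem_cons.mp ha with rfl | ha
    · exact Or.inr ⟨S, n, hS, hn, Or.inl rfl⟩
    rcases Multiset.mem_cons.mp ha with rfl | ha
    · exact Or.inr ⟨S, n, hS, hn, Or.inr rfl⟩
    · have := Multiset.eq_of_mem_replicate ha
      subst this
      exact Or.inl (Or.inl rfl)
  · rw [Multiset.sum_cons, Multiset.sum_cons, sum_replicate_uA]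
    simp only [vA, wA, xT]
    rw [pp_add, pp_add]
    rw [show QE (Encodable.encode S) + (QE (Encodable.encode S) - n + 2 + (n - 2))
        = 2 * QE (Encodable.encode S) from by omega]
    rw [show n * YY (Encodable.encode S)
          + ((3 * NE (Encodable.encode S) - n) * YY (Encodable.encode S) + 0)
        = 3 * NE (Encodable.encode S) * YY (Encodable.encode S) from by
      rw [add_zero, ← Nat.add_mul, show n + (3 * NE (Encodable.encode S) - n)
          = 3 * NE (Encodable.encode S) from by omega]]

lemma lengths_xT {d : ℕ} (hd : 2 ≤ d) {S : Finset ℕ} (hS : FValid S) :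
    LengthsOf (Hm d) (xT S) = (↑S : Set ℕ) := by
  ext l
  simp only [LengthsOf, Set.mem_setOf_eq, Finset.coe_sort_coe, Finset.mem_coe]
  constructor
  · rintro ⟨s, hs, hsum, rfl⟩
    have hmem : ∀ a ∈ s, a ∈ AtomSet d := fun a ha => isAtom_mem_atomSet hd (hs a ha)
    exact card_mem_of_sum_xT hd hS hmem hsum
  · intro hl
    have h2l := hS.2 l hl
    have hlN := mem_le_NE hS hl
    have hN2 := two_le_NE (Encodable.encode S)
    have hQN : QE (Encodable.encode S) = 4 * NE (Encodable.encode S) := rfl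
    refine ⟨vA S l ::ₘ wA S l ::ₘ Multiset.replicate (l - 2) uA, ?_, ?_, ?_⟩
    · intro a ha
      apply atomSet_isAtom hd
      rcases Multiset.mem_cons.mp ha with rfl | ha
      · exact Or.inr ⟨S, l, hS, hl, Or.inl rfl⟩
      rcases Multiset.mem_cons.mp ha with rfl | ha
      · exact Or.inr ⟨S, l, hS, hl, Or.inr rfl⟩
      · have := Multiset.eq_of_mem_replicate ha
        subst this
        exact Or.inl (Or.inl rfl)
    · rw [Multiset.sum_cons, Multiset.sum_cons, sum_replicate_uA]
      simp only [vA, wA, xT]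
      rw [pp_add, pp_add]
      rw [show QE (Encodable.encode S) + (QE (Encodable.encode S) - l + 2 + (l - 2))
          = 2 * QE (Encodable.encode S) from by omega]
      rw [show l * YY (Encodable.encode S)
            + ((3 * NE (Encodable.encode S) - l) * YY (Encodable.encode S) + 0)
          = 3 * NE (Encodable.encode S) * YY (Encodable.encode S) from by
        rw [add_zero, ← Nat.add_mul, show l + (3 * NE (Encodable.encode S) - l)
            = 3 * NE (Encodable.encode S) from by omega]]
    · simp only [Multiset.card_cons, Multiset.card_replicate]
      omega

/-! ### Rank -/

lemma fvalid_two : FValid ({2} : Finset ℕ) := by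
  constructor
  · exact ⟨2, by simp⟩
  · intro n hn
    simp only [Finset.mem_singleton] at hn
    omega

lemma rank_Hm {d : ℕ} (hd : 2 ≤ d) : monoidRank (Hm d) = d := by
  have h0d : 0 < d := by omega
  have h1d : 1 < d := by omega
  unfold monoidRank
  have hspan : Submodule.span ℚ ((fun x : Fin d → ℕ => fun i => (x i : ℚ)) '' ↑(Hm d)) = ⊤ := by
    set sp := Submodule.span ℚ ((fun x : Fin d → ℕ => fun i => (x i : ℚ)) '' ↑(Hm d)) with hsp
    -- e₀
    have huA : (fun i => ((uA : Fin d → ℕ) i : ℚ)) = Pi.single (⟨0, h0d⟩ : Fin d) (1 : ℚ) := by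
      funext j
      by_cases hj : (j : ℕ) = 0
      · have hjj : j = ⟨0, h0d⟩ := Fin.ext (by simpa using hj)
        subst hjj
        simp [uA, pp]
      · have hne : j ≠ ⟨0, h0d⟩ := by
          intro h
          exact hj (by rw [h])
        simp [uA, pp, hj, hne, Pi.single_apply]
    have h0mem : Pi.single (⟨0, h0d⟩ : Fin d) (1 : ℚ) ∈ sp := by
      rw [← huA]
      exact Submodule.subset_span
        ⟨uA, AddSubmonoid.subset_closure (Or.inl (Or.inl rfl)), rfl⟩
    -- e_i for i ≥ 2
    have honemem : ∀ i : Fin d, 2 ≤ (i : ℕ) → Pi.single i (1 : ℚ) ∈ sp := by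
      intro i hi
      have hcast : (fun j => ((Pi.single i 1 : Fin d → ℕ) j : ℚ)) = Pi.single i (1 : ℚ) := by
        funext j
        by_cases hj : j = i <;> simp [Pi.single_apply, hj]
      rw [← hcast]
      exact Submodule.subset_span
        ⟨Pi.single i 1, AddSubmonoid.subset_closure (Or.inl (Or.inr ⟨i, hi, rfl⟩)), rfl⟩
    -- e₁
    have h1mem : Pi.single (⟨1, h1d⟩ : Fin d) (1 : ℚ) ∈ sp := by
      set Q : ℕ := QE (Encodable.encode ({2} : Finset ℕ)) with hQdef
      set B : ℕ := YY (Encodable.encode ({2} : Finset ℕ)) with hBdef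
      have hBpos : 1 ≤ B := YY_pos _
      have hBne : ((2 * B : ℕ) : ℚ) ≠ 0 := Nat.cast_ne_zero.mpr (by omega)
      have hv : (fun i => ((vA ({2} : Finset ℕ) 2 : Fin d → ℕ) i : ℚ))
          = ((Q : ℚ) • (Pi.single (⟨0, h0d⟩ : Fin d) (1 : ℚ) : Fin d → ℚ)
            + (((2 * B : ℕ) : ℚ)) • (Pi.single (⟨1, h1d⟩ : Fin d) (1 : ℚ) : Fin d → ℚ)) := by
        funext j
        simp only [vA, pp, Pi.add_apply, Pi.smul_apply, Pi.single_apply, smul_eq_mul]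
        by_cases hj0 : (j : ℕ) = 0
        · have hjj : j = ⟨0, h0d⟩ := Fin.ext (by simpa using hj0)
          subst hjj
          have hne1 : (⟨0, h0d⟩ : Fin d) ≠ ⟨1, h1d⟩ := by
            intro h
            have := Fin.mk.injEq 0 h0d 1 h1d ▸ h
            simp [Fin.ext_iff] at h
          simp [hne1]
          exact hQdef.symm
        · by_cases hj1 : (j : ℕ) = 1
          · have hjj : j = ⟨1, h1d⟩ := Fin.ext (by simpa using hj1)
            subst hjj
            have hne0 : (⟨1, h1d⟩ : Fin d) ≠ ⟨0, h0d⟩ := by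
              simp [Fin.ext_iff]
            rw [if_neg hj0, if_pos hj1]
            simp [hne0]
            exact hBdef.symm
          · have hne0 : j ≠ ⟨0, h0d⟩ := by
              intro h; exact hj0 (by rw [h])
            have hne1 : j ≠ ⟨1, h1d⟩ := by
              intro h; exact hj1 (by rw [h])
            rw [if_neg hj0, if_neg hj1]
            simp [hne0, hne1]
      have hvmem : (fun i => ((vA ({2} : Finset ℕ) 2 : Fin d → ℕ) i : ℚ)) ∈ sp :=
        Submodule.subset_span ⟨vA ({2} : Finset ℕ) 2,
          AddSubmonoid.subset_closure
            (Or.inr ⟨{2}, 2, fvalid_two, by simp, Or.inl rfl⟩), rfl⟩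
      have heq : (Pi.single (⟨1, h1d⟩ : Fin d) (1 : ℚ) : Fin d → ℚ)
          = (((2 * B : ℕ) : ℚ))⁻¹ • ((fun i => ((vA ({2} : Finset ℕ) 2 : Fin d → ℕ) i : ℚ))
            - (Q : ℚ) • (Pi.single (⟨0, h0d⟩ : Fin d) (1 : ℚ) : Fin d → ℚ)) := by
        rw [hv, add_sub_cancel_left, smul_smul, inv_mul_cancel₀ hBne, one_smul]
      rw [heq]
      exact Submodule.smul_mem _ _ (Submodule.sub_mem _ hvmem (Submodule.smul_mem _ _ h0mem))
    -- all basis vectors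
    have hkey : ∀ i : Fin d, Pi.single i (1 : ℚ) ∈ sp := by
      intro i
      rcases Nat.lt_or_ge (i : ℕ) 2 with h | h
      · rcases Nat.lt_or_ge (i : ℕ) 1 with h' | h'
        · have : i = ⟨0, h0d⟩ := Fin.ext (by simp only [Fin.val_mk]; omega)
          rw [this]; exact h0mem
        · have : i = ⟨1, h1d⟩ := Fin.ext (by simp only [Fin.val_mk]; omega)
          rw [this]; exact h1mem
      · exact honemem i h
    apply eq_top_iff.mpr
    intro x _
    have hx : x = ∑ i, x i • (Pi.single i 1 : Fin d → ℚ) := by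
      ext j; simp [Pi.single_apply]
    rw [hx]
    exact Submodule.sum_mem _ fun i _ => Submodule.smul_mem _ _ (hkey i)
  rw [hspan]
  simp

/-- For every `d ≥ 2` there is a rank-`d` submonoid of `ℕ^d` whose system of sets of lengths
is all of `P_fin = {{0},{1}} ∪ {finite nonempty sets of integers ≥ 2}`. -/
theorem stmt14 (d : ℕ) (hd : 2 ≤ d) :
    ∃ H : AddSubmonoid (Fin d → ℕ), monoidRank H = d ∧
      {L | ∃ x ∈ H, LengthsOf H x = L} =
        ({{0}, {1}} : Set (Set ℕ)) ∪
          {S : Set ℕ | S.Finite ∧ S.Nonempty ∧ ∀ n ∈ S, 2 ≤ n} := by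
  refine ⟨Hm d, rank_Hm hd, ?_⟩
  ext L
  simp only [Set.mem_setOf_eq, Set.mem_union, Set.mem_insert_iff, Set.mem_singleton_iff]
  constructor
  · rintro ⟨x, hx, rfl⟩
    by_cases h0 : x = 0
    · subst h0
      exact Or.inl (Or.inl (lengths_zero hd))
    by_cases hat : IsAtomOf (Hm d) x
    · exact Or.inl (Or.inr (lengths_atom hd hat))
    · exact Or.inr ⟨lengths_finite x, lengths_nonempty hd hx, lengths_ge_two hd h0 hat⟩
  · rintro ((h | h) | ⟨hfin, hne, h2⟩)
    · exact ⟨0, (Hm d).zero_mem, by rw [h]; exact lengths_zero hd⟩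
    · refine ⟨uA, AddSubmonoid.subset_closure (Or.inl (Or.inl rfl)), ?_⟩
      rw [h]
      exact lengths_atom hd (atomSet_isAtom hd (Or.inl (Or.inl rfl)))
    · have hSv : FValid hfin.toFinset := by
        constructor
        · obtain ⟨x, hx⟩ := hne
          exact ⟨x, hfin.mem_toFinset.mpr hx⟩
        · intro n hn
          exact h2 n (hfin.mem_toFinset.mp hn)
      refine ⟨xT hfin.toFinset, xT_mem_Hm hd hSv, ?_⟩
      rw [lengths_xT hd hSv]
      exact hfin.coe_toFinset
end

section
/- Let H be a submonoid of ℕ^d (d ≥ 3) that is not finitely generated, and suppose the convex cone generated by H in ℚ^d is polyhedral (equivalently, finitely generated as a cone). Then ρ(H) = ∞. -/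
open scoped ENNReal

/-- The elasticity `ρ(x) = sup L(x) / inf L(x)` of an element, valued in `[0,∞]`. -/
noncomputable def elasticityOf {d : ℕ} (S : AddSubmonoid (Fin d → ℕ)) (x : Fin d → ℕ) :
    ℝ≥0∞ :=
  sSup ((fun n : ℕ => (n : ℝ≥0∞)) '' LengthsOf S x) /
    sInf ((fun n : ℕ => (n : ℝ≥0∞)) '' LengthsOf S x)

/-- The elasticity `ρ(H) = sup {ρ(x) : x ∈ H, x ≠ 0}` of the monoid. -/
noncomputable def monoidElasticity {d : ℕ} (S : AddSubmonoid (Fin d → ℕ)) : ℝ≥0∞ :=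
  sSup {ρ | ∃ x ∈ S, x ≠ 0 ∧ elasticityOf S x = ρ}

/-- The convex cone generated by a subset of `ℚ^d`: all nonnegative rational combinations. -/
def coneOf {d : ℕ} (X : Set (Fin d → ℚ)) : Set (Fin d → ℚ) :=
  {y | ∃ (n : ℕ) (v : Fin n → Fin d → ℚ) (c : Fin n → ℚ),
    (∀ i, v i ∈ X) ∧ (∀ i, 0 ≤ c i) ∧ y = ∑ i, c i • v i}

section cone
variable {d : ℕ} {X Y : Set (Fin d → ℚ)}

lemma mem_coneOf_self {x : Fin d → ℚ} (hx : x ∈ X) : x ∈ coneOf X :=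
  ⟨1, fun _ => x, fun _ => 1, fun _ => hx, fun _ => zero_le_one, by simp⟩

lemma zero_mem_coneOf (X : Set (Fin d → ℚ)) : (0 : Fin d → ℚ) ∈ coneOf X :=
  ⟨0, Fin.elim0, Fin.elim0, fun i => i.elim0, fun i => i.elim0, by simp⟩

lemma add_mem_coneOf {x y : Fin d → ℚ} (hx : x ∈ coneOf X) (hy : y ∈ coneOf X) :
    x + y ∈ coneOf X := by
  obtain ⟨n, v, c, hv, hc, rfl⟩ := hx
  obtain ⟨m, w, e, hw, he, rfl⟩ := hy
  refine ⟨n + m, Fin.addCases v w, Fin.addCases c e, ?_, ?_, ?_⟩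
  · intro i
    refine Fin.addCases (fun j => ?_) (fun j => ?_) i <;> simp [hv, hw]
  · intro i
    refine Fin.addCases (fun j => ?_) (fun j => ?_) i <;> simp [hc, he]
  · rw [Fin.sum_univ_add]
    simp

lemma smul_mem_coneOf {q : ℚ} (hq : 0 ≤ q) {x : Fin d → ℚ} (hx : x ∈ coneOf X) :
    q • x ∈ coneOf X := by
  obtain ⟨n, v, c, hv, hc, rfl⟩ := hx
  refine ⟨n, v, fun i => q * c i, hv, fun i => mul_nonneg hq (hc i), ?_⟩
  rw [Finset.smul_sum]
  simp [mul_smul]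

lemma sum_mem_coneOf {ι : Type*} (s : Finset ι) (f : ι → Fin d → ℚ)
    (h : ∀ i ∈ s, f i ∈ coneOf X) : ∑ i ∈ s, f i ∈ coneOf X := by
  classical
  induction s using Finset.induction with
  | empty => simpa using zero_mem_coneOf X
  | @insert a t hni ih =>
    rw [Finset.sum_insert hni]
    exact add_mem_coneOf (h _ (Finset.mem_insert_self _ _))
      (ih fun i hi => h i (Finset.mem_insert_of_mem hi))

lemma coneOf_subset (h : X ⊆ coneOf Y) : coneOf X ⊆ coneOf Y := by
  rintro x ⟨n, v, c, hv, hc, rfl⟩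
  exact sum_mem_coneOf _ _ fun i _ => smul_mem_coneOf (hc i) (h (hv i))

lemma coneOf_mono (h : X ⊆ Y) : coneOf X ⊆ coneOf Y :=
  coneOf_subset fun x hx => mem_coneOf_self (h hx)

end cone

section fact
variable {d : ℕ} {H : AddSubmonoid (Fin d → ℕ)}

lemma sum_pos_of_ne_zero {x : Fin d → ℕ} (hx : x ≠ 0) : 1 ≤ ∑ k, x k := by
  by_contra h
  push_neg at h
  apply hx
  funext k
  have := Finset.sum_eq_zero_iff.mp (Nat.lt_one_iff.mp h)
  exact this k (Finset.mem_univ k)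

lemma exists_factorization (x : Fin d → ℕ) (hx : x ∈ H) :
    ∃ s : Multiset (Fin d → ℕ), (∀ a ∈ s, IsAtomOf H a) ∧ s.sum = x := by
  classical
  suffices h : ∀ N : ℕ, ∀ x : Fin d → ℕ, x ∈ H → ∑ k, x k ≤ N →
      ∃ s : Multiset (Fin d → ℕ), (∀ a ∈ s, IsAtomOf H a) ∧ s.sum = x from
    h _ x hx le_rfl
  intro N
  induction N with
  | zero =>
    intro x hx h0
    refine ⟨0, by simp, ?_⟩
    have : x = 0 := by
      by_contra hne
      exact absurd (le_trans (sum_pos_of_ne_zero hne) h0) (by simp)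
    simp [this]
  | succ N ih =>
    intro x hx hle
    by_cases hx0 : x = 0
    · exact ⟨0, by simp, by simp [hx0]⟩
    by_cases hat : IsAtomOf H x
    · exact ⟨{x}, by simpa using hat, by simp⟩
    · have hex : ∃ y ∈ H, ∃ z ∈ H, x = y + z ∧ ¬(y = 0 ∨ z = 0) := by
        by_contra hc
        push_neg at hc
        exact hat ⟨hx, hx0, hc⟩
      obtain ⟨y, hy, z, hz, hxyz, hor⟩ := hex
      push_neg at hor
      obtain ⟨hy0, hz0⟩ := hor
      have hsum : ∑ k, y k + ∑ k, z k ≤ N + 1 := by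
        rw [← Finset.sum_add_distrib]
        simpa [hxyz] using hle
      have hyN : ∑ k, y k ≤ N := by
        have := sum_pos_of_ne_zero hz0; omega
      have hzN : ∑ k, z k ≤ N := by
        have := sum_pos_of_ne_zero hy0; omega
      obtain ⟨s1, hs1, hsum1⟩ := ih y hy hyN
      obtain ⟨s2, hs2, hsum2⟩ := ih z hz hzN
      refine ⟨s1 + s2, ?_, by simp [hsum1, hsum2, hxyz]⟩
      intro a ha
      rcases Multiset.mem_add.mp ha with h | h
      · exact hs1 a h
      · exact hs2 a h

lemma atoms_infinite (hfg : ¬ H.FG) : {a | IsAtomOf H a}.Infinite := by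
  by_contra hfin
  rw [Set.not_infinite] at hfin
  apply hfg
  refine ⟨hfin.toFinset, ?_⟩
  apply le_antisymm
  · rw [AddSubmonoid.closure_le]
    intro a ha
    simp only [Finset.coe_sort_coe, Set.Finite.coe_toFinset, Set.mem_setOf_eq] at ha
    exact ha.1
  · intro x hx
    obtain ⟨s, hs, rfl⟩ := exists_factorization x hx
    exact AddSubmonoid.multiset_sum_mem _ _ fun a ha =>
      AddSubmonoid.subset_closure (by simpa using hs a ha)

lemma exists_big_atom (hfg : ¬ H.FG) (N : ℕ) : ∃ b, IsAtomOf H b ∧ N ≤ ∑ k, b k := by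
  by_contra h
  push_neg at h
  have hsub : {a | IsAtomOf H a} ⊆ {x : Fin d → ℕ | ∀ k, x k ≤ N} := by
    intro a ha k
    exact le_trans (Finset.single_le_sum (f := a) (fun i _ => Nat.zero_le _)
      (Finset.mem_univ k)) (le_of_lt (h a ha))
  have hfin : ({x : Fin d → ℕ | ∀ k, x k ≤ N}).Finite := by
    have : {x : Fin d → ℕ | ∀ k, x k ≤ N} = Set.pi Set.univ (fun _ => Set.Iic N) := by
      ext x; simp [Set.mem_pi, Pi.le_def]
    rw [this]
    exact Set.Finite.pi fun _ => Set.finite_Iic N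
  exact atoms_infinite hfg (hfin.subset hsub)

end fact

lemma exists_nat_mul_den {q : ℚ} (hq : 0 ≤ q) {M : ℕ} (hM : q.den ∣ M) :
    ∃ c : ℕ, (c : ℚ) = q * M := by
  obtain ⟨t, rfl⟩ := hM
  refine ⟨q.num.toNat * t, ?_⟩
  have h1 : ((q.num.toNat : ℕ) : ℚ) = (q.num : ℚ) := by
    rw [show ((q.num.toNat : ℕ) : ℚ) = ((q.num.toNat : ℤ) : ℚ) by push_cast; ring]
    rw [Int.toNat_of_nonneg (Rat.num_nonneg.mpr hq)]
  push_cast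
  rw [h1, ← mul_assoc, Rat.mul_den_eq_num]

lemma multiset_card_finset_sum {ι α : Type*} (u : Finset ι) (f : ι → Multiset α) :
    Multiset.card (∑ i ∈ u, f i) = ∑ i ∈ u, Multiset.card (f i) := by
  classical
  induction u using Finset.induction with
  | empty => simp
  | @insert a t h ih => rw [Finset.sum_insert h, Finset.sum_insert h, Multiset.card_add, ih]

lemma multiset_sum_finset_sum {ι α : Type*} [AddCommMonoid α] (u : Finset ι)
    (f : ι → Multiset α) : (∑ i ∈ u, f i).sum = ∑ i ∈ u, (f i).sum := by
  classical
  induction u using Finset.induction with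
  | empty => simp
  | @insert a t h ih => rw [Finset.sum_insert h, Finset.sum_insert h, Multiset.sum_add, ih]

lemma multiset_sum_nsmul {α : Type*} [AddCommMonoid α] (c : ℕ) (s : Multiset α) :
    (c • s).sum = c • s.sum := by
  induction c with
  | zero => simp
  | succ k ih => rw [succ_nsmul, succ_nsmul, Multiset.sum_add, ih]

/-- If `H ⊆ ℕ^d` (`d ≥ 3`) is not finitely generated and the cone generated by `H` in `ℚ^d`
is polyhedral (i.e. finitely generated as a cone), then `ρ(H) = ∞`. -/
theorem stmt17 (d : ℕ) (hd : 3 ≤ d) (H : AddSubmonoid (Fin d → ℕ)) (hfg : ¬ H.FG)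
    (hpoly : ∃ S : Finset (Fin d → ℚ),
      coneOf (S : Set (Fin d → ℚ)) =
        coneOf ((fun x : Fin d → ℕ => fun i => (x i : ℚ)) '' H)) :
    monoidElasticity H = ⊤ := by
  classical
  obtain ⟨S, hS⟩ := hpoly
  set cst : (Fin d → ℕ) → (Fin d → ℚ) := fun x : Fin d → ℕ => fun i => (x i : ℚ) with hcst
  -- a finite generating set A0 for the cone, inside cst '' H
  have hrep : ∀ s : {y // y ∈ (S : Set (Fin d → ℚ))}, ∃ A : Set (Fin d → ℚ),
      A.Finite ∧ A ⊆ cst '' (H : Set (Fin d → ℕ)) ∧ (s : Fin d → ℚ) ∈ coneOf A := by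
    rintro ⟨s, hs⟩
    have hmem : s ∈ coneOf (cst '' (H : Set (Fin d → ℕ))) := hS ▸ mem_coneOf_self hs
    obtain ⟨n, v, c, hv, hc, rfl⟩ := hmem
    exact ⟨Set.range v, Set.finite_range v, Set.range_subset_iff.2 hv,
      ⟨n, v, c, fun i => Set.mem_range_self i, hc, rfl⟩⟩
  choose A hA1 hA2 hA3 using hrep
  set A0 : Set (Fin d → ℚ) := ⋃ s, A s with hA0
  have hA0fin : A0.Finite := Set.finite_iUnion hA1
  have hA0sub : A0 ⊆ cst '' (H : Set (Fin d → ℕ)) := Set.iUnion_subset hA2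
  have hcone : coneOf (cst '' (H : Set (Fin d → ℕ))) ⊆ coneOf A0 := by
    rw [← hS]
    refine coneOf_subset ?_
    intro s hs
    exact coneOf_mono (Set.subset_iUnion A ⟨s, hs⟩) (hA3 ⟨s, hs⟩)
  -- a uniform bound on coordinate sums of elements of A0
  obtain ⟨C0, hC0⟩ : ∃ C0 : ℕ, ∀ y ∈ A0, ∑ k, y k ≤ (C0 : ℚ) := by
    obtain ⟨r, hr⟩ := (hA0fin.image (fun y => ∑ k, y k)).bddAbove
    obtain ⟨C0, hC0⟩ := exists_nat_ge r
    exact ⟨C0, fun y hy => le_trans (hr (Set.mem_image_of_mem _ hy)) hC0⟩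
  set C := max C0 1 with hCdef
  have hCpos : 0 < C := lt_of_lt_of_le Nat.one_pos (le_max_right _ _)
  have key : ∀ n : ℕ, (n : ℝ≥0∞) ≤ monoidElasticity H := by
    intro n
    obtain ⟨b, hb, hbig⟩ := exists_big_atom hfg (n * C)
    have hbcone : cst b ∈ coneOf A0 := hcone (mem_coneOf_self ⟨b, hb.1, rfl⟩)
    obtain ⟨m, v, q, hv, hq, hbeq⟩ := hbcone
    have hpre : ∀ i, ∃ a : Fin d → ℕ, a ∈ H ∧ cst a = v i := by
      intro i
      obtain ⟨a, ha, haeq⟩ := hA0sub (hv i)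
      exact ⟨a, ha, haeq⟩
    choose a ha hacast using hpre
    -- clear denominators
    set M : ℕ := ∏ i, (q i).den with hM
    have hMpos : 0 < M := Finset.prod_pos fun i _ => (q i).den_pos
    have hdvd : ∀ i, (q i).den ∣ M := fun i => Finset.dvd_prod_of_mem _ (Finset.mem_univ i)
    choose c hcQ using fun i => exists_nat_mul_den (hq i) (hdvd i)
    -- the integral identity M • b = ∑ c i • a i
    have hmain : M • b = ∑ i, c i • a i := by
      funext k
      have hQ : ((M • b) k : ℚ) = ((∑ i, c i • a i) k : ℚ) := by
        have hbk := congrFun hbeq k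
        simp only [hcst, Finset.sum_apply, Pi.smul_apply, smul_eq_mul] at hbk
        have hak : ∀ i, ((a i k : ℚ)) = v i k := fun i => congrFun (hacast i) k
        simp only [Finset.sum_apply, Pi.smul_apply, smul_eq_mul]
        push_cast
        calc (M : ℚ) * (b k : ℚ) = (M : ℚ) * ∑ i, q i * v i k := by rw [hbk]
          _ = ∑ i, (q i * M) * v i k := by
              rw [Finset.mul_sum]; exact Finset.sum_congr rfl fun i _ => by ring
          _ = ∑ i, (c i : ℚ) * (a i k : ℚ) := by
              refine Finset.sum_congr rfl fun i _ => ?_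
              rw [hcQ i, hak i]
      exact_mod_cast hQ
    -- norm identity
    have hnorm : M * ∑ k, b k = ∑ i, c i * ∑ k, a i k := by
      calc M * ∑ k, b k = ∑ k, (M • b) k := by
            simp [Finset.mul_sum]
        _ = ∑ k, (∑ i, c i • a i) k := by rw [hmain]
        _ = ∑ i, c i * ∑ k, a i k := by
            simp only [Finset.sum_apply, Pi.smul_apply, smul_eq_mul]
            rw [Finset.sum_comm]
            simp [Finset.mul_sum]
    -- factor each a i into atoms
    choose s hs hssum using fun i => exists_factorization (a i) (ha i)
    set t : Multiset (Fin d → ℕ) := ∑ i, c i • s i with ht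
    have htsum : t.sum = M • b := by
      rw [ht, multiset_sum_finset_sum, hmain]
      exact Finset.sum_congr rfl fun i _ => by rw [multiset_sum_nsmul, hssum i]
    set L : ℕ := Multiset.card t with hL
    have htcard : L = ∑ i, c i * Multiset.card (s i) := by
      rw [hL, ht, multiset_card_finset_sum]
      exact Finset.sum_congr rfl fun i _ => Multiset.card_nsmul _ _
    have htatom : ∀ x ∈ t, IsAtomOf H x := by
      intro x hx
      rw [ht] at hx
      obtain ⟨i, -, hi⟩ := Multiset.mem_sum.mp hx
      exact hs i x (Multiset.mem_of_mem_nsmul hi)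
    -- counting
    have hbound : ∀ i, c i * ∑ k, a i k ≤ C * (c i * Multiset.card (s i)) := by
      intro i
      by_cases hai : a i = 0
      · simp [hai]
      · have h1 : ∑ k, a i k ≤ C := by
          have hvC : ∑ k, v i k ≤ (C0 : ℚ) := hC0 _ (hv i)
          have : ((∑ k, a i k : ℕ) : ℚ) ≤ (C0 : ℚ) := by
            push_cast
            calc ∑ k, (a i k : ℚ) = ∑ k, v i k :=
                  Finset.sum_congr rfl fun k _ => congrFun (hacast i) k
              _ ≤ (C0 : ℚ) := hvC
          exact le_trans (by exact_mod_cast this) (le_max_left _ _)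
        have h2 : 1 ≤ Multiset.card (s i) := by
          rcases Nat.eq_zero_or_pos (Multiset.card (s i)) with h0 | h0
          · exfalso
            apply hai
            rw [← hssum i, Multiset.card_eq_zero.mp h0, Multiset.sum_zero]
          · exact h0
        calc c i * ∑ k, a i k ≤ c i * C := Nat.mul_le_mul_left _ h1
          _ = C * (c i * 1) := by ring
          _ ≤ C * (c i * Multiset.card (s i)) :=
              Nat.mul_le_mul_left _ (Nat.mul_le_mul_left _ h2)
    have hLlower : n * M ≤ L := by
      have hstep : C * (n * M) ≤ C * L := by
        calc C * (n * M) = M * (n * C) := by ring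
          _ ≤ M * ∑ k, b k := Nat.mul_le_mul_left _ hbig
          _ = ∑ i, c i * ∑ k, a i k := hnorm
          _ ≤ ∑ i, C * (c i * Multiset.card (s i)) :=
              Finset.sum_le_sum fun i _ => hbound i
          _ = C * ∑ i, c i * Multiset.card (s i) := by rw [Finset.mul_sum]
          _ = C * L := by rw [htcard]
      exact Nat.le_of_mul_le_mul_left hstep hCpos
    -- the element x = M • b
    have hLmem : L ∈ LengthsOf H (M • b) := ⟨t, htatom, htsum, rfl⟩
    have hMmem : M ∈ LengthsOf H (M • b) := by
      refine ⟨Multiset.replicate M b, ?_, ?_, by simp⟩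
      · intro x hx
        rw [Multiset.eq_of_mem_replicate hx]
        exact hb
      · rw [Multiset.sum_replicate]
    have hxH : M • b ∈ H := nsmul_mem hb.1 M
    have hxne : M • b ≠ 0 := by
      intro h0
      obtain ⟨k, hk⟩ : ∃ k, b k ≠ 0 := by
        by_contra hall
        push_neg at hall
        exact hb.2.1 (funext hall)
      have hk0 := congrFun h0 k
      simp only [Pi.smul_apply, smul_eq_mul, Pi.zero_apply, Nat.mul_eq_zero] at hk0
      rcases hk0 with h | h
      · exact absurd h hMpos.ne'
      · exact hk h
    have hsup : (L : ℝ≥0∞) ≤ sSup ((fun n : ℕ => (n : ℝ≥0∞)) '' LengthsOf H (M • b)) :=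
      le_sSup ⟨L, hLmem, rfl⟩
    have hinf : sInf ((fun n : ℕ => (n : ℝ≥0∞)) '' LengthsOf H (M • b)) ≤ (M : ℝ≥0∞) :=
      sInf_le ⟨M, hMmem, rfl⟩
    have helast : (n : ℝ≥0∞) ≤ elasticityOf H (M • b) := by
      have hMne : (M : ℝ≥0∞) ≠ 0 := by exact_mod_cast hMpos.ne'
      have hMnetop : (M : ℝ≥0∞) ≠ ⊤ := ENNReal.natCast_ne_top M
      calc (n : ℝ≥0∞) = ((n * M : ℕ) : ℝ≥0∞) / (M : ℝ≥0∞) := by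
            push_cast
            rw [mul_div_assoc, ENNReal.div_self hMne hMnetop, mul_one]
        _ ≤ (L : ℝ≥0∞) / (M : ℝ≥0∞) :=
            ENNReal.div_le_div (by exact_mod_cast hLlower) le_rfl
        _ ≤ elasticityOf H (M • b) := ENNReal.div_le_div hsup hinf
    exact le_trans helast (le_sSup ⟨M • b, hxH, hxne, rfl⟩)
  by_contra htop
  obtain ⟨n, hn⟩ := ENNReal.exists_nat_gt htop
  exact absurd (key n) (not_le.mpr hn)
end
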